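/- Let κ : E → ℝ be a bounded measurable function with essential sup norm at most κ_max, and let k ≥ 1 be an integer. For p, q : ℝ² → ℝ continuously differentiable, set a(p,q) := ∫_E κ ∇p · ∇q dx and a^Π(p,q) := ∫_E κ (Π⁰_{k−1} ∇p) · (Π⁰_{k−1} ∇q) dx. Then a^Π(p,q) − a(p,q) ≤ ℰ_{k−1}(κ ∇p) · ℰ_{k−1}(∇q) + ℰ_{k−1}(κ ∇q) · ℰ_{k−1}(∇p) + κ_max · ℰ_{k−1}(∇p) · ℰ_{k−1}(∇q). -/

import Mathlib

open MeasureTheory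
open scoped RealInnerProductSpace

noncomputable section

abbrev Plane := EuclideanSpace ℝ (Fin 2)

/-- `f` is (the restriction of) a real polynomial function on `ℝ²` of total degree at most `m`. -/
def IsPolyDeg (m : ℕ) (f : Plane → ℝ) : Prop :=
  ∃ P : MvPolynomial (Fin 2) ℝ, P.totalDegree ≤ m ∧ ∀ x, f x = MvPolynomial.eval (fun i => x i) P

/-- `Pf` is the `L²(E)`-orthogonal projection of `f` onto the space of polynomial
functions of total degree `≤ m`: it is such a polynomial and the error is
`L²(E)`-orthogonal to all such polynomials. -/
def IsL2Proj (E : Set Plane) (m : ℕ) (f Pf : Plane → ℝ) : Prop :=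
  IsPolyDeg m Pf ∧ ∀ g : Plane → ℝ, IsPolyDeg m g → ∫ x in E, (f x - Pf x) * g x = 0

/-- Componentwise `L²(E)`-projection for `ℝ²`-valued functions. -/
def IsL2ProjV (E : Set Plane) (m : ℕ) (f Pf : Plane → Plane) : Prop :=
  ∀ i : Fin 2, IsL2Proj E m (fun x => f x i) (fun x => Pf x i)

/-- `ℰ_m(f) = ‖f - Π⁰_m f‖_{L²(E)}` for a scalar function, where `Pf = Π⁰_m f`. -/
def errS (E : Set Plane) (f Pf : Plane → ℝ) : ℝ :=
  Real.sqrt (∫ x in E, (f x - Pf x) ^ 2)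

/-- `ℰ_m(f) = ‖f - Π⁰_m f‖_{L²(E)}` for an `ℝ²`-valued function, where `Pf = Π⁰_m f`. -/
def errV (E : Set Plane) (f Pf : Plane → Plane) : ℝ :=
  Real.sqrt (∫ x in E, ‖f x - Pf x‖ ^ 2)

/-- `L²(E)` norm of a scalar function. -/
def l2normS (E : Set Plane) (f : Plane → ℝ) : ℝ :=
  Real.sqrt (∫ x in E, (f x) ^ 2)

/-- `L²(E)` norm of an `ℝ²`-valued function. -/
def l2normV (E : Set Plane) (f : Plane → Plane) : ℝ :=
  Real.sqrt (∫ x in E, ‖f x‖ ^ 2)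

/-! Write `u = ∇p - Π∇p` and `v = ∇q - Π∇q`. Pointwise,
`κ (Π∇p · Π∇q - ∇p · ∇q) = κ u · v - u · κ∇q - v · κ∇p`.
Since `u` is `L²(E)`-orthogonal to the polynomial field `Π(κ∇q)`, the integral of `u · κ∇q`
equals that of `u · (κ∇q - Π(κ∇q))`, and symmetrically for `v`; Cauchy–Schwarz in `L²(E)`
then bounds each of the three terms by a product of projection errors. -/

open scoped ENNReal

section InnerL2

variable {α G : Type*} [MeasurableSpace α] {μ : Measure α}
  [NormedAddCommGroup G] [InnerProductSpace ℝ G] {f g : α → G}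

theorem MeasureTheory.MemLp.integrable_inner (hf : MemLp f 2 μ) (hg : MemLp g 2 μ) :
    Integrable (fun x => ⟪f x, g x⟫) μ :=
  memLp_one_iff_integrable.1 ((innerSL ℝ).memLp_of_bilin 1 hf hg)

theorem MeasureTheory.MemLp.norm_toLp_two (hf : MemLp f 2 μ) :
    ‖hf.toLp f‖ = √(∫ x, ‖f x‖ ^ 2 ∂μ) := by
  rw [← Real.sqrt_sq (norm_nonneg _), ← real_inner_self_eq_norm_sq, L2.inner_def]
  refine congrArg _ (integral_congr_ae ?_)
  filter_upwards [hf.coeFn_toLp] with x hx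
  rw [hx, real_inner_self_eq_norm_sq]

theorem abs_integral_inner_le (hf : MemLp f 2 μ) (hg : MemLp g 2 μ) :
    |∫ x, ⟪f x, g x⟫ ∂μ| ≤ √(∫ x, ‖f x‖ ^ 2 ∂μ) * √(∫ x, ‖g x‖ ^ 2 ∂μ) := by
  have h : ∫ x, ⟪f x, g x⟫ ∂μ = ⟪hf.toLp f, hg.toLp g⟫ := by
    rw [L2.inner_def]
    refine integral_congr_ae ?_
    filter_upwards [hf.coeFn_toLp, hg.coeFn_toLp] with x hfx hgx
    rw [hfx, hgx]
  rw [h, ← hf.norm_toLp_two, ← hg.norm_toLp_two]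
  exact abs_real_inner_le_norm _ _

theorem integral_smul_inner_le {κ : α → ℝ} {C : ℝ} (hκ : AEStronglyMeasurable κ μ)
    (hκC : ∀ᵐ x ∂μ, |κ x| ≤ C) (hf : MemLp f 2 μ) (hg : MemLp g 2 μ) :
    ∫ x, ⟪κ x • f x, g x⟫ ∂μ ≤ C * √(∫ x, ‖f x‖ ^ 2 ∂μ) * √(∫ x, ‖g x‖ ^ 2 ∂μ) := by
  rcases eq_or_ne μ 0 with rfl | hμ
  · simp
  have hC : 0 ≤ C := by
    have := ae_neBot.2 hμ
    obtain ⟨x, hx⟩ := hκC.exists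
    exact (abs_nonneg _).trans hx
  have hκf : MemLp (fun x => κ x • f x) 2 μ :=
    hf.smul (memLp_top_of_bound hκ C (by simpa using hκC))
  have hnorm : √(∫ x, ‖κ x • f x‖ ^ 2 ∂μ) ≤ C * √(∫ x, ‖f x‖ ^ 2 ∂μ) := by
    rw [← Real.sqrt_sq hC, ← Real.sqrt_mul (sq_nonneg C), ← integral_const_mul]
    refine Real.sqrt_le_sqrt
      (integral_mono_ae hκf.norm.integrable_sq (hf.norm.integrable_sq.const_mul _) ?_)
    filter_upwards [hκC] with x hx
    rw [norm_smul, mul_pow, Real.norm_eq_abs]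
    gcongr
  calc ∫ x, ⟪κ x • f x, g x⟫ ∂μ ≤ |∫ x, ⟪κ x • f x, g x⟫ ∂μ| := le_abs_self _
    _ ≤ √(∫ x, ‖κ x • f x‖ ^ 2 ∂μ) * √(∫ x, ‖g x‖ ^ 2 ∂μ) := abs_integral_inner_le hκf hg
    _ ≤ C * √(∫ x, ‖f x‖ ^ 2 ∂μ) * √(∫ x, ‖g x‖ ^ 2 ∂μ) := by gcongr

theorem integral_mul_inner_sub_integral_mul_inner {κ : α → ℝ} (hκ : MemLp κ ∞ μ)
    {a b Pa Pb : α → G} (ha : MemLp a 2 μ) (hb : MemLp b 2 μ) (hPa : MemLp Pa 2 μ)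
    (hPb : MemLp Pb 2 μ) :
    ∫ x, κ x * ⟪Pa x, Pb x⟫ ∂μ - ∫ x, κ x * ⟪a x, b x⟫ ∂μ =
      ∫ x, ⟪κ x • (a x - Pa x), b x - Pb x⟫ ∂μ - ∫ x, ⟪a x - Pa x, κ x • b x⟫ ∂μ
        - ∫ x, ⟪b x - Pb x, κ x • a x⟫ ∂μ := by
  have hu : MemLp (fun x => a x - Pa x) 2 μ := ha.sub hPa
  have hv : MemLp (fun x => b x - Pb x) 2 μ := hb.sub hPb
  have hκ' : ∀ {c : α → G}, MemLp c 2 μ → MemLp (fun x => κ x • c x) 2 μ := fun hc => hc.smul hκ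
  simp_rw [← real_inner_smul_left]
  rw [← integral_sub ((hκ' hPa).integrable_inner hPb) ((hκ' ha).integrable_inner hb),
    ← integral_sub ((hκ' hu).integrable_inner hv) (hu.integrable_inner (hκ' hb)),
    ← integral_sub (by exact ((hκ' hu).integrable_inner hv).sub (hu.integrable_inner (hκ' hb)))
      (hv.integrable_inner (hκ' ha))]
  refine integral_congr_ae (.of_forall fun x => ?_)
  simp only [inner_sub_left, inner_sub_right, real_inner_smul_left, real_inner_smul_right,
    real_inner_comm (a x)]
  ring

end InnerL2

theorem ContDiff.continuous_gradient {F : Type*} [NormedAddCommGroup F] [InnerProductSpace ℝ F]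
    [CompleteSpace F] {f : F → ℝ} (hf : ContDiff ℝ 1 f) : Continuous (gradient f) :=
  (InnerProductSpace.toDual ℝ F).symm.continuous.comp (hf.continuous_fderiv one_ne_zero)

theorem Continuous.memLp_restrict_of_isBounded {X F : Type*} [PseudoMetricSpace X] [ProperSpace X]
    [MeasurableSpace X] [OpensMeasurableSpace X] {μ : Measure X} [IsFiniteMeasureOnCompacts μ]
    [NormedAddCommGroup F] {f : X → F} (hf : Continuous f) {s : Set X}
    (hs : Bornology.IsBounded s) (p : ℝ≥0∞) : MemLp f p (μ.restrict s) := by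
  have hK : IsCompact (closure s) := hs.isCompact_closure
  obtain ⟨C, hC⟩ := hK.exists_bound_of_continuousOn hf.continuousOn
  have : IsFiniteMeasure (μ.restrict (closure s)) :=
    isFiniteMeasure_restrict.2 hK.measure_lt_top.ne
  refine (MemLp.of_bound hf.aestronglyMeasurable C ?_).mono_measure
    (Measure.restrict_mono subset_closure le_rfl)
  exact ae_restrict_of_forall_mem isClosed_closure.measurableSet hC

section Projection

variable {E : Set Plane} {m : ℕ}

theorem IsPolyDeg.continuous {f : Plane → ℝ} (hf : IsPolyDeg m f) : Continuous f := by
  obtain ⟨P, -, hP⟩ := hf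
  rw [funext hP]
  exact (MvPolynomial.continuous_eval P).comp (PiLp.continuous_ofLp 2 _)

theorem IsL2ProjV.continuous {f Pf : Plane → Plane} (hP : IsL2ProjV E m f Pf) : Continuous Pf :=
  (PiLp.continuous_toLp 2 _).comp (continuous_pi fun i => (hP i).1.continuous)

theorem IsL2ProjV.integral_inner_eq_zero {f Pf g : Plane → Plane} (hP : IsL2ProjV E m f Pf)
    (hf : MemLp f 2 (volume.restrict E)) (hPf : MemLp Pf 2 (volume.restrict E))
    (hg : ∀ i, IsPolyDeg m fun x => g x i) (hgL : MemLp g 2 (volume.restrict E)) :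
    ∫ x in E, ⟪f x - Pf x, g x⟫ = 0 := by
  have hcomp : ∀ {h : Plane → Plane}, MemLp h 2 (volume.restrict E) →
      ∀ i, MemLp (fun x => h x i) 2 (volume.restrict E) :=
    fun hh i => (EuclideanSpace.proj (𝕜 := ℝ) i).comp_memLp' hh
  have hint : ∀ i ∈ Finset.univ,
      Integrable (fun x => (f x i - Pf x i) * g x i) (volume.restrict E) :=
    fun i _ => ((hcomp hf i).sub (hcomp hPf i)).integrable_mul (hcomp hgL i)
  simp only [PiLp.inner_apply, PiLp.sub_apply, RCLike.inner_apply', conj_trivial]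
  rw [integral_finsetSum _ hint]
  exact Finset.sum_eq_zero fun i _ => (hP i).2 _ (hg i)

theorem IsL2ProjV.integral_inner_eq_integral_inner_sub {f Pf h Ph : Plane → Plane}
    (hP : IsL2ProjV E m f Pf) (hQ : IsL2ProjV E m h Ph) (hf : MemLp f 2 (volume.restrict E))
    (hPf : MemLp Pf 2 (volume.restrict E)) (hh : MemLp h 2 (volume.restrict E))
    (hPh : MemLp Ph 2 (volume.restrict E)) :
    ∫ x in E, ⟪f x - Pf x, h x⟫ = ∫ x in E, ⟪f x - Pf x, h x - Ph x⟫ := by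
  have hr : MemLp (fun x => f x - Pf x) 2 (volume.restrict E) := hf.sub hPf
  simp_rw [inner_sub_right _ (h _)]
  rw [integral_sub (hr.integrable_inner hh) (hr.integrable_inner hPh),
    hP.integral_inner_eq_zero hf hPf (fun i => (hQ i).1) hPh, sub_zero]

end Projection

theorem statement4_general
    (E : Set Plane) (hEbdd : Bornology.IsBounded E)
    (κ : Plane → ℝ) (κmax : ℝ) (hκmeas : Measurable κ)
    (hκbdd : ∀ᵐ x ∂(volume.restrict E), |κ x| ≤ κmax)
    (k : ℕ)
    (p q : Plane → ℝ) (hp : ContDiff ℝ 1 p) (hq : ContDiff ℝ 1 q)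
    (Pgp Pgq Pκgp Pκgq : Plane → Plane)
    (hPgp : IsL2ProjV E (k - 1) (gradient p) Pgp)
    (hPgq : IsL2ProjV E (k - 1) (gradient q) Pgq)
    (hPκgp : IsL2ProjV E (k - 1) (fun x => κ x • gradient p x) Pκgp)
    (hPκgq : IsL2ProjV E (k - 1) (fun x => κ x • gradient q x) Pκgq) :
    (∫ x in E, κ x * ⟪Pgp x, Pgq x⟫) - (∫ x in E, κ x * ⟪gradient p x, gradient q x⟫) ≤
      errV E (fun x => κ x • gradient p x) Pκgp * errV E (gradient q) Pgq
        + errV E (fun x => κ x • gradient q x) Pκgq * errV E (gradient p) Pgp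
        + κmax * errV E (gradient p) Pgp * errV E (gradient q) Pgq := by
  have hL2 : ∀ {f : Plane → Plane}, Continuous f → MemLp f 2 (volume.restrict E) :=
    fun hf => hf.memLp_restrict_of_isBounded hEbdd 2
  have hκ : MemLp κ ∞ (volume.restrict E) :=
    memLp_top_of_bound hκmeas.aestronglyMeasurable κmax (by simpa using hκbdd)
  have hgp := hL2 hp.continuous_gradient
  have hgq := hL2 hq.continuous_gradient
  have hκgp : MemLp (fun x => κ x • gradient p x) 2 (volume.restrict E) := hgp.smul hκ
  have hκgq : MemLp (fun x => κ x • gradient q x) 2 (volume.restrict E) := hgq.smul hκ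
  have hPgp' := hL2 hPgp.continuous
  have hPgq' := hL2 hPgq.continuous
  have hPκgp' := hL2 hPκgp.continuous
  have hPκgq' := hL2 hPκgq.continuous
  rw [integral_mul_inner_sub_integral_mul_inner hκ hgp hgq hPgp' hPgq',
    hPgp.integral_inner_eq_integral_inner_sub hPκgq hgp hPgp' hκgq hPκgq',
    hPgq.integral_inner_eq_integral_inner_sub hPκgp hgq hPgq' hκgp hPκgp']
  have h1 : ∫ x in E, ⟪κ x • (gradient p x - Pgp x), gradient q x - Pgq x⟫ ≤
      κmax * errV E (gradient p) Pgp * errV E (gradient q) Pgq :=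
    integral_smul_inner_le hκmeas.aestronglyMeasurable hκbdd (hgp.sub hPgp') (hgq.sub hPgq')
  have h2 : |∫ x in E, ⟪gradient p x - Pgp x, κ x • gradient q x - Pκgq x⟫| ≤
      errV E (gradient p) Pgp * errV E (fun x => κ x • gradient q x) Pκgq :=
    abs_integral_inner_le (hgp.sub hPgp') (hκgq.sub hPκgq')
  have h3 : |∫ x in E, ⟪gradient q x - Pgq x, κ x • gradient p x - Pκgp x⟫| ≤
      errV E (gradient q) Pgq * errV E (fun x => κ x • gradient p x) Pκgp :=
    abs_integral_inner_le (hgq.sub hPgq') (hκgp.sub hPκgp')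
  linarith [neg_abs_le (∫ x in E, ⟪gradient p x - Pgp x, κ x • gradient q x - Pκgq x⟫),
    neg_abs_le (∫ x in E, ⟪gradient q x - Pgq x, κ x • gradient p x - Pκgp x⟫)]

/-- estimate (5.9) of the paper, diffusion part: for
`a(p,q) = ∫_E κ ∇p·∇q` and `a^Π(p,q) = ∫_E κ (Π⁰_{k−1}∇p)·(Π⁰_{k−1}∇q)`,
`a^Π(p,q) − a(p,q) ≤ ℰ_{k−1}(κ∇p)ℰ_{k−1}(∇q) + ℰ_{k−1}(κ∇q)ℰ_{k−1}(∇p)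
  + κmax ℰ_{k−1}(∇p)ℰ_{k−1}(∇q)`. -/
theorem statement4
    (E : Set Plane) (hEopen : IsOpen E) (hEbdd : Bornology.IsBounded E)
    (hEpos : 0 < volume E)
    (κ : Plane → ℝ) (κmax : ℝ) (hκmeas : Measurable κ)
    (hκbdd : ∀ᵐ x ∂(volume.restrict E), |κ x| ≤ κmax)
    (k : ℕ) (hk : 1 ≤ k)
    (p q : Plane → ℝ) (hp : ContDiff ℝ 1 p) (hq : ContDiff ℝ 1 q)
    (Pgp Pgq Pκgp Pκgq : Plane → Plane)
    (hPgp : IsL2ProjV E (k - 1) (gradient p) Pgp)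
    (hPgq : IsL2ProjV E (k - 1) (gradient q) Pgq)
    (hPκgp : IsL2ProjV E (k - 1) (fun x => κ x • gradient p x) Pκgp)
    (hPκgq : IsL2ProjV E (k - 1) (fun x => κ x • gradient q x) Pκgq) :
    (∫ x in E, κ x * ⟪Pgp x, Pgq x⟫) - (∫ x in E, κ x * ⟪gradient p x, gradient q x⟫) ≤
      errV E (fun x => κ x • gradient p x) Pκgp * errV E (gradient q) Pgq
        + errV E (fun x => κ x • gradient q x) Pκgq * errV E (gradient p) Pgp
        + κmax * errV E (gradient p) Pgp * errV E (gradient q) Pgq :=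
  statement4_general E hEbdd κ κmax hκmeas hκbdd k p q hp hq Pgp Pgq Pκgp Pκgq hPgp hPgq hPκgp hPκgq
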